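/- Let p be a distribution over top-k-lists on [n] and ε > 0. Set m = ⌈(1+1/ε)(k−1)⌉. Let σ' sort candidates by nonincreasing Score, and let σ be the permutation minimizing K(·,p) among permutations that agree with σ' on the set of candidates with rank > m in σ' (i.e., obtained by permuting only the first m candidates of σ'). Then K(σ,p) ≤ (1+ε)·min_{σ*} K(σ*,p). -/

import Mathlib

/-!
Let `s` be `σ'` with its first `M` positions reordered as in an optimal `σ*`. Then `s` and `σ*`
disagree only on pairs `(i, j)` where `σ'` puts `i` at a rank `> M` behind `j`, so
`Score(i) ≤ Score(j)`, and then `p(i before j) - p(j before i) ≤ p(both ranked)`; summing over `j`,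
`K(s) ≤ K(σ*) + (k - 1) Σ_{σ'(i) > M} Score(i)`. Since `σ'` sorts by score, this tail sum is at
most the one of `σ*`. In `σ*`, a ranked candidate at rank `> M` is preceded by at least `M + 1 - k`
unranked ones, each a discordant pair, so `K(σ*) ≥ (M + 1 - k) Σ_{σ*(i) > M} Score(i)`. The choice
of `M` gives `k - 1 ≤ ε (M + 1 - k)`, and `σ` is no worse than `s`.

Ranks are `0`-indexed: `M ≤ σ' i` means that `i` has rank `> M`.
-/

open Finset

/-- A top-`k`-list on `[n]`. -/
def IsTopList (n k : ℕ) (π : Fin n → ℕ∞) : Prop :=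
  (∀ i, π i ≠ ⊤ → 1 ≤ π i ∧ π i ≤ (k : ℕ∞)) ∧
  (∀ r : ℕ, 1 ≤ r → r ≤ k → ∃! i, π i = (r : ℕ∞))

/-- Generalized Kendall tau distance between a permutation and a top-list. -/
def kendallGen {n : ℕ} (σ : Equiv.Perm (Fin n)) (π : Fin n → ℕ∞) : ℕ :=
  (Finset.univ.filter (fun q : Fin n × Fin n => σ q.2 < σ q.1 ∧ π q.1 < π q.2)).card

/-- Score of candidate `i`. -/
def score {n m : ℕ} (w : Fin m → ℝ) (π : Fin m → Fin n → ℕ∞) (i : Fin n) : ℝ :=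
  ∑ v, if π v i ≠ ⊤ then w v else 0

/-- Average generalized Kendall tau cost of `σ` against the voting profile. -/
def kendallCost {n m : ℕ} (w : Fin m → ℝ) (π : Fin m → Fin n → ℕ∞)
    (σ : Equiv.Perm (Fin n)) : ℝ :=
  ∑ v, w v * (kendallGen σ (π v) : ℝ)

theorem IsTopList.card_ranked_le {n k : ℕ} {π₀ : Fin n → ℕ∞} (h : IsTopList n k π₀) :
    #{i | π₀ i ≠ ⊤} ≤ k := by
  have hrange : ∀ i, π₀ i ≠ ⊤ → (π₀ i).toNat ∈ Icc 1 k := fun i hi => by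
    have := h.1 i hi
    rw [← ENat.natCast_toNat hi] at this
    exact mem_Icc.mpr ⟨by exact_mod_cast this.1, by exact_mod_cast this.2⟩
  calc #{i | π₀ i ≠ ⊤} ≤ #(Icc 1 k) := by
        refine card_le_card_of_injOn (fun i => (π₀ i).toNat)
          (fun i hi => hrange i (mem_filter.mp hi).2) fun a ha b hb hab => ?_
        replace ha := (mem_filter.mp ha).2
        replace hb := (mem_filter.mp hb).2
        obtain ⟨c, -, hc⟩ := h.2 _ (mem_Icc.mp (hrange a ha)).1 (mem_Icc.mp (hrange a ha)).2
        refine (hc a (ENat.natCast_toNat ha).symm).trans (hc b ?_).symm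
        rw [show (π₀ a).toNat = (π₀ b).toNat from hab, ENat.natCast_toNat hb]
    _ = k := by simp

theorem Equiv.Perm.card_filter_apply_lt {n : ℕ} (τ : Equiv.Perm (Fin n)) (i : Fin n) :
    #{j | τ j < τ i} = τ i := by
  rw [← Fin.card_Iio (τ i)]
  exact card_equiv τ (by simp)

theorem kendallGen_eq_sum_card {n : ℕ} (τ : Equiv.Perm (Fin n)) (π₀ : Fin n → ℕ∞) :
    kendallGen τ π₀ = ∑ i, #{j | τ j < τ i ∧ π₀ i < π₀ j} := by
  rw [kendallGen,
    card_eq_sum_card_fiberwise (f := Prod.fst) (fun q _ => mem_coe.mpr (mem_univ q.1))]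
  refine sum_congr rfl fun i _ => card_nbij' Prod.snd (fun j => (i, j)) ?_ ?_ ?_ ?_ <;>
    rintro ⟨a, b⟩ <;> simp +contextual [eq_comm]

theorem apply_lt_card_discordant_add {n k : ℕ} (τ : Equiv.Perm (Fin n)) {π₀ : Fin n → ℕ∞}
    (hk : #{i | π₀ i ≠ ⊤} ≤ k) {i : Fin n} (hi : π₀ i ≠ ⊤) :
    (τ i : ℕ) < #{j | τ j < τ i ∧ π₀ i < π₀ j} + k := by
  have hsplit := card_filter_add_card_filter_not (s := {j | τ j < τ i}) (fun j => π₀ j ≠ ⊤)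
  rw [τ.card_filter_apply_lt, filter_filter, filter_filter] at hsplit
  have hranked : #{j | τ j < τ i ∧ π₀ j ≠ ⊤} < #{j | π₀ j ≠ ⊤} :=
    card_lt_card ⟨fun j => by simp +contextual, fun hsub =>
      lt_irrefl _ (mem_filter.mp (hsub (mem_filter.mpr ⟨mem_univ i, hi⟩))).2.1⟩
  have hunranked : #{j | τ j < τ i ∧ ¬π₀ j ≠ ⊤} ≤ #{j | τ j < τ i ∧ π₀ i < π₀ j} :=
    card_le_card fun j => by simp +contextual [lt_top_iff_ne_top.mpr hi]
  omega

theorem mul_card_ranked_tail_le_kendallGen {n k : ℕ} (M : ℕ) (τ : Equiv.Perm (Fin n))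
    {π₀ : Fin n → ℕ∞} (hk : #{i | π₀ i ≠ ⊤} ≤ k) :
    ((M : ℝ) + 1 - k) * #{i | M ≤ (τ i : ℕ) ∧ π₀ i ≠ ⊤} ≤ kendallGen τ π₀ := by
  rw [kendallGen_eq_sum_card, mul_comm, ← nsmul_eq_mul, Nat.cast_sum]
  refine (card_nsmul_le_sum _ _ _ fun i hi => ?_).trans
    (sum_le_sum_of_subset_of_nonneg (subset_univ _) fun _ _ _ => Nat.cast_nonneg _)
  obtain ⟨hM, hi⟩ := (mem_filter.mp hi).2
  have := apply_lt_card_discordant_add τ hk hi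
  have : (M : ℝ) + 1 ≤ #{j | τ j < τ i ∧ π₀ i < π₀ j} + k := by exact_mod_cast (by omega)
  linarith

theorem Finset.sum_le_sum_of_card_eq {ι M : Type*} [DecidableEq ι] [AddCommMonoid M] [LinearOrder M]
    [IsOrderedAddMonoid M] {s t : Finset ι} {f : ι → M} (hcard : #s = #t)
    (hle : ∀ a ∈ s, ∀ b ∉ s, f a ≤ f b) : ∑ a ∈ s, f a ≤ ∑ b ∈ t, f b := by
  rw [← sum_inter_add_sum_sdiff s t f, ← sum_inter_add_sum_sdiff t s f, inter_comm t s]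
  refine add_le_add_right ?_ _
  have hc : #(s \ t) = #(t \ s) := card_sdiff_comm hcard
  rcases (t \ s).eq_empty_or_nonempty with he | ⟨b, hb⟩
  · rw [he, card_empty, card_eq_zero] at hc
    rw [hc, he]
  obtain ⟨b₀, hb₀, hmin⟩ := exists_min_image (t \ s) f ⟨b, hb⟩
  calc ∑ a ∈ s \ t, f a ≤ #(s \ t) • f b₀ :=
        sum_le_card_nsmul _ _ _ fun a ha => hle a (mem_sdiff.mp ha).1 b₀ (mem_sdiff.mp hb₀).2
    _ = #(t \ s) • f b₀ := by rw [hc]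
    _ ≤ ∑ b ∈ t \ s, f b := card_nsmul_le_sum _ _ _ hmin

theorem exists_perm_lt_iff_of_injective {n : ℕ} {β : Type*} [LinearOrder β] {key : Fin n → β}
    (hkey : Function.Injective key) :
    ∃ s : Equiv.Perm (Fin n), ∀ i j, s i < s j ↔ key i < key j := by
  have hmono : StrictMono (key ∘ Tuple.sort key) :=
    (Tuple.monotone_sort key).strictMono_of_injective (hkey.comp (Tuple.sort key).injective)
  refine ⟨(Tuple.sort key).symm, fun i j => ?_⟩
  simpa using (hmono.lt_iff_lt (a := (Tuple.sort key).symm i) (b := (Tuple.sort key).symm j)).symm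

theorem exists_perm_eq_on_tail_of_inversion {n : ℕ} (M : ℕ) (σ' σ₀ : Equiv.Perm (Fin n)) :
    ∃ s : Equiv.Perm (Fin n), (∀ i, M ≤ (σ' i : ℕ) → s i = σ' i) ∧
      ∀ i j, s j < s i → σ₀ i < σ₀ j → M ≤ (σ' i : ℕ) ∧ σ' j < σ' i := by
  -- Sorting by `key` keeps the tail of `σ'` (shifted by `n` behind everything else) and orders
  -- the head as `σ₀` does.
  set key : Fin n → ℕ := fun i => if M ≤ (σ' i : ℕ) then n + σ' i else σ₀ i with hkey
  have hbound : ∀ i, (σ' i : ℕ) < n ∧ (σ₀ i : ℕ) < n := fun i => ⟨(σ' i).isLt, (σ₀ i).isLt⟩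
  have hkey_tail : ∀ i j, M ≤ (σ' i : ℕ) → (key j < key i ↔ σ' j < σ' i) := by
    intro i j hi
    have := hbound i; have := hbound j
    simp only [hkey, Fin.lt_def]
    split_ifs <;> omega
  have hkey_head : ∀ i j, ¬ M ≤ (σ' i : ℕ) → key j < key i → σ₀ j < σ₀ i := by
    intro i j hi
    have := hbound i; have := hbound j
    simp only [hkey, Fin.lt_def]
    split_ifs <;> omega
  have hinj : Function.Injective key := fun i j hij => by
    have := hbound i; have := hbound j
    simp only [hkey] at hij
    split_ifs at hij
    · exact σ'.injective (Fin.ext (by omega))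
    · omega
    · omega
    · exact σ₀.injective (Fin.ext hij)
  obtain ⟨s, hs⟩ := exists_perm_lt_iff_of_injective hinj
  refine ⟨s, fun i hi => Fin.ext ?_, fun i j hji hσ₀ => ?_⟩
  · rw [← s.card_filter_apply_lt, ← σ'.card_filter_apply_lt]
    exact congrArg card (filter_congr fun j _ => (hs j i).trans (hkey_tail i j hi))
  · have hi : M ≤ (σ' i : ℕ) := by
      by_contra hi
      exact (hkey_head i j hi ((hs j i).mp hji)).not_gt hσ₀
    exact ⟨hi, (hkey_tail i j hi).mp ((hs j i).mp hji)⟩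

section Weighted

variable {n mm : ℕ} (w : Fin mm → ℝ) (π : Fin mm → Fin n → ℕ∞)

theorem sum_score_eq (A : Finset (Fin n)) :
    ∑ i ∈ A, score w π i = ∑ v, w v * #{i ∈ A | π v i ≠ ⊤} := by
  simp only [score]
  rw [sum_comm]
  refine sum_congr rfl fun v _ => ?_
  rw [← sum_filter, sum_const, nsmul_eq_mul, mul_comm]

theorem score_nonneg (hw : ∀ v, 0 ≤ w v) (i : Fin n) : 0 ≤ score w π i :=
  sum_nonneg fun v _ => by split_ifs <;> simp [hw v]

theorem mul_sum_score_tail_le_kendallCost {k : ℕ} (hw : ∀ v, 0 ≤ w v)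
    (hk : ∀ v, #{i | π v i ≠ ⊤} ≤ k) (M : ℕ) (τ : Equiv.Perm (Fin n)) :
    ((M : ℝ) + 1 - k) * ∑ i with M ≤ (τ i : ℕ), score w π i ≤ kendallCost w π τ := by
  rw [sum_score_eq, mul_sum, kendallCost]
  refine sum_le_sum fun v _ => ?_
  rw [filter_filter, mul_left_comm]
  exact mul_le_mul_of_nonneg_left (mul_card_ranked_tail_le_kendallGen M τ (hk v)) (hw v)

/-- Unranked candidates sit at `⊤`, so this also counts the votes ranking `i` but not `j`. -/
def precProb (i j : Fin n) : ℝ :=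
  ∑ v, if π v i < π v j then w v else 0

def bothRankedProb (i j : Fin n) : ℝ :=
  ∑ v, if π v i ≠ ⊤ ∧ π v j ≠ ⊤ then w v else 0

theorem bothRankedProb_nonneg (hw : ∀ v, 0 ≤ w v) (i j : Fin n) : 0 ≤ bothRankedProb w π i j :=
  sum_nonneg fun v _ => by split_ifs <;> simp [hw v]

theorem kendallCost_eq_sum_precProb (τ : Equiv.Perm (Fin n)) :
    kendallCost w π τ = ∑ i, ∑ j, if τ j < τ i then precProb w π i j else 0 := by
  simp only [kendallCost, kendallGen_eq_sum_card, Nat.cast_sum, mul_sum, precProb]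
  rw [sum_comm]
  refine sum_congr rfl fun i _ => ?_
  rw [← sum_filter, sum_comm]
  refine sum_congr rfl fun v _ => ?_
  rw [← sum_filter, filter_filter, sum_const, nsmul_eq_mul, mul_comm]

theorem kendallCost_sub_kendallCost (τ₁ τ₂ : Equiv.Perm (Fin n)) :
    kendallCost w π τ₁ - kendallCost w π τ₂ = ∑ i, ∑ j,
      if τ₁ j < τ₁ i ∧ τ₂ i < τ₂ j then precProb w π i j - precProb w π j i else 0 := by
  have hswap : ∑ i, ∑ j, (if τ₂ j < τ₂ i ∧ τ₁ i < τ₁ j then precProb w π i j else 0) =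
      ∑ i, ∑ j, if τ₁ j < τ₁ i ∧ τ₂ i < τ₂ j then precProb w π j i else 0 := by
    rw [sum_comm]
    exact sum_congr rfl fun i _ => sum_congr rfl fun j _ => if_congr and_comm rfl rfl
  have hpair : ∀ (τ τ' : Equiv.Perm (Fin n)) (i j : Fin n),
      (if τ j < τ i then precProb w π i j else 0) =
        (if τ j < τ i ∧ τ' j < τ' i then precProb w π i j else 0) +
          if τ j < τ i ∧ τ' i < τ' j then precProb w π i j else 0 := by
    intro τ τ' i j
    rcases lt_trichotomy (τ' j) (τ' i) with h | h | h
    · simp [h, h.not_gt]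
    · simp [τ'.injective h]
    · simp [h, h.not_gt]
  have hcommon : ∑ i, ∑ j, (if τ₁ j < τ₁ i ∧ τ₂ j < τ₂ i then precProb w π i j else 0) =
      ∑ i, ∑ j, if τ₂ j < τ₂ i ∧ τ₁ j < τ₁ i then precProb w π i j else 0 :=
    sum_congr rfl fun i _ => sum_congr rfl fun j _ => if_congr and_comm rfl rfl
  simp only [kendallCost_eq_sum_precProb, hpair τ₁ τ₂, hpair τ₂ τ₁, sum_add_distrib]
  rw [hswap, hcommon, add_sub_add_left_eq_sub, ← sum_sub_distrib]
  refine sum_congr rfl fun i _ => ?_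
  rw [← sum_sub_distrib]
  exact sum_congr rfl fun j _ => by split_ifs <;> ring

theorem precProb_sub_precProb_le (hw : ∀ v, 0 ≤ w v) (i j : Fin n) :
    precProb w π i j - precProb w π j i ≤ bothRankedProb w π i j + score w π i - score w π j := by
  simp only [precProb, bothRankedProb, score, ← sum_sub_distrib, ← sum_add_distrib]
  refine sum_le_sum fun v _ => ?_
  have := hw v
  rcases eq_or_ne (π v i) ⊤ with hi | hi <;> rcases eq_or_ne (π v j) ⊤ with hj | hj
  · simp [hi, hj]
  · simp [hi, hj, lt_top_iff_ne_top]
  · simp [hi, hj, lt_top_iff_ne_top]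
  · simp only [hi, hj, ne_eq, not_false_eq_true, and_self, if_true]
    split_ifs <;> linarith

theorem sum_bothRankedProb_le {k : ℕ} (hw : ∀ v, 0 ≤ w v) (hk : ∀ v, #{i | π v i ≠ ⊤} ≤ k)
    (i : Fin n) : ∑ j ∈ univ.erase i, bothRankedProb w π i j ≤ (k - 1 : ℕ) * score w π i := by
  simp only [bothRankedProb, score]
  rw [sum_comm, mul_sum]
  refine sum_le_sum fun v _ => ?_
  by_cases hi : π v i = ⊤
  · simp [hi]
  · have hcard : #{j ∈ univ.erase i | π v j ≠ ⊤} ≤ k - 1 := by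
      rw [filter_erase, card_erase_of_mem (mem_filter.mpr ⟨mem_univ i, hi⟩)]
      exact Nat.sub_le_sub_right (hk v) 1
    simp only [hi, ne_eq, not_false_eq_true, true_and, if_true]
    rw [← sum_filter, sum_const, nsmul_eq_mul]
    exact mul_le_mul_of_nonneg_right (by exact_mod_cast hcard) (hw v)

theorem kendallCost_le_add_of_inversions {k : ℕ} (hw : ∀ v, 0 ≤ w v)
    (hk : ∀ v, #{i | π v i ≠ ⊤} ≤ k) (τ τ' : Equiv.Perm (Fin n)) (A : Finset (Fin n))
    (hinv : ∀ i j, τ j < τ i → τ' i < τ' j → i ∈ A ∧ score w π i ≤ score w π j) :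
    kendallCost w π τ ≤ kendallCost w π τ' + (k - 1 : ℕ) * ∑ i ∈ A, score w π i := by
  have hrow : ∀ i, (∑ j, if τ j < τ i ∧ τ' i < τ' j
      then precProb w π i j - precProb w π j i else 0) ≤
        if i ∈ A then (k - 1 : ℕ) * score w π i else 0 := by
    intro i
    by_cases hi : i ∈ A
    · rw [if_pos hi]
      refine le_trans ?_ (sum_bothRankedProb_le w π hw hk i)
      calc _ ≤ ∑ j, if j ≠ i then bothRankedProb w π i j else 0 := by
            refine sum_le_sum fun j _ => ?_
            split_ifs with hc hji
            · linarith [precProb_sub_precProb_le w π hw i j, (hinv i j hc.1 hc.2).2]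
            · exact absurd hc.1 (by simp [not_not.mp hji])
            · exact bothRankedProb_nonneg w π hw i j
            · exact le_rfl
        _ = _ := by rw [← sum_filter, filter_ne']
    · rw [if_neg hi]
      exact (sum_eq_zero fun j _ => if_neg fun h => hi (hinv i j h.1 h.2).1).le
  rw [← sub_le_iff_le_add', kendallCost_sub_kendallCost, mul_sum, ← univ_inter A, ← sum_ite_mem]
  exact sum_le_sum fun i _ => hrow i

end Weighted

theorem sum_score_tail_le {n mm : ℕ} {w : Fin mm → ℝ} {π : Fin mm → Fin n → ℕ∞} (M : ℕ)
    {σ' : Equiv.Perm (Fin n)} (hσ' : ∀ i j, score w π j < score w π i → σ' i < σ' j)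
    (τ : Equiv.Perm (Fin n)) :
    ∑ i with M ≤ (σ' i : ℕ), score w π i ≤ ∑ i with M ≤ (τ i : ℕ), score w π i := by
  refine sum_le_sum_of_card_eq ?_ fun a ha b hb => ?_
  · have hcard : ∀ τ : Equiv.Perm (Fin n), #{i | M ≤ (τ i : ℕ)} = #{x : Fin n | M ≤ (x : ℕ)} :=
      fun τ => card_equiv τ (by simp)
    rw [hcard, hcard]
  · by_contra! hlt
    have := Fin.lt_def.mp (hσ' a b hlt)
    simp only [mem_filter, mem_univ, true_and] at ha hb
    omega

theorem cast_sub_one_le_mul_of_le {ε : ℝ} (hε : 0 < ε) {k M : ℕ}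
    (hM : (1 + 1 / ε) * ((k : ℝ) - 1) ≤ M) : ((k - 1 : ℕ) : ℝ) ≤ ε * ((M : ℝ) + 1 - k) := by
  rcases Nat.eq_zero_or_pos k with rfl | hk
  · simp only [Nat.zero_sub, CharP.cast_eq_zero, sub_zero]
    positivity
  have h := mul_le_mul_of_nonneg_left hM hε.le
  have heq : ε * ((1 + 1 / ε) * ((k : ℝ) - 1)) = ε * ((k : ℝ) - 1) + ((k : ℝ) - 1) := by
    field_simp
  push_cast [Nat.cast_sub hk]
  linarith

theorem score_then_adjust_ptas_general {n mm k : ℕ} (ε : ℝ) (hε : 0 < ε)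
    (w : Fin mm → ℝ) (hw : ∀ v, 0 ≤ w v)
    (π : Fin mm → Fin n → ℕ∞) (hπ : ∀ v, IsTopList n k (π v))
    (M : ℕ) (hM : M = ⌈(1 + 1 / ε) * ((k : ℝ) - 1)⌉₊)
    (σ' : Equiv.Perm (Fin n))
    (hσ' : ∀ i j : Fin n, score w π j < score w π i → σ' i < σ' j)
    (σ : Equiv.Perm (Fin n))
    (hbest : ∀ s : Equiv.Perm (Fin n),
      (∀ i : Fin n, M < (σ' i : ℕ) + 1 → s i = σ' i) →
      kendallCost w π σ ≤ kendallCost w π s)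
    (σstar : Equiv.Perm (Fin n)) :
    kendallCost w π σ ≤ (1 + ε) * kendallCost w π σstar := by
  have hk : ∀ v, #{i | π v i ≠ ⊤} ≤ k := fun v => (hπ v).card_ranked_le
  obtain ⟨s, hs_tail, hs_inv⟩ := exists_perm_eq_on_tail_of_inversion M σ' σstar
  have hupper := kendallCost_le_add_of_inversions w π hw hk s σstar {i | M ≤ (σ' i : ℕ)}
    fun i j hs hstar => ⟨by simpa using (hs_inv i j hs hstar).1,
      not_lt.mp fun h => (hσ' i j h).not_gt (hs_inv i j hs hstar).2⟩
  have hlower := mul_sum_score_tail_le_kendallCost w π hw hk M σstar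
  have hcoeff := cast_sub_one_le_mul_of_le hε (k := k) (hM ▸ Nat.le_ceil _)
  have htail_nonneg : 0 ≤ ∑ i with M ≤ (σstar i : ℕ), score w π i :=
    sum_nonneg fun i _ => score_nonneg w π hw i
  calc kendallCost w π σ ≤ kendallCost w π s := hbest s fun i hi => hs_tail i (by omega)
    _ ≤ kendallCost w π σstar + (k - 1 : ℕ) * ∑ i with M ≤ (σ' i : ℕ), score w π i := hupper
    _ ≤ kendallCost w π σstar + (k - 1 : ℕ) * ∑ i with M ≤ (σstar i : ℕ), score w π i := by
        gcongr _ + _ * ?_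
        exact sum_score_tail_le M hσ' σstar
    _ ≤ kendallCost w π σstar +
          ε * (((M : ℝ) + 1 - k) * ∑ i with M ≤ (σstar i : ℕ), score w π i) := by
        rw [← mul_assoc]
        gcongr
    _ ≤ (1 + ε) * kendallCost w π σstar := by
        linarith [mul_le_mul_of_nonneg_left hlower hε.le]

/-- `Score-then-Adjust` is a `(1+ε)`-approximation for top-`k`-list
aggregation: sort candidates by nonincreasing score into `σ'`, then choose the
best permutation `σ` among those agreeing with `σ'` on all candidates of
(1-indexed) rank greater than `m = ⌈(1+1/ε)(k−1)⌉`. -/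
theorem score_then_adjust_ptas {n mm k : ℕ} (ε : ℝ) (hε : 0 < ε)
    (w : Fin mm → ℝ) (hw : ∀ v, 0 ≤ w v) (hw1 : ∑ v, w v = 1)
    (π : Fin mm → Fin n → ℕ∞) (hπ : ∀ v, IsTopList n k (π v))
    (M : ℕ) (hM : M = ⌈(1 + 1 / ε) * ((k : ℝ) - 1)⌉₊)
    (σ' : Equiv.Perm (Fin n))
    (hσ' : ∀ i j : Fin n, score w π j < score w π i → σ' i < σ' j)
    (σ : Equiv.Perm (Fin n))
    (hagree : ∀ i : Fin n, M < (σ' i : ℕ) + 1 → σ i = σ' i)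
    (hbest : ∀ s : Equiv.Perm (Fin n),
      (∀ i : Fin n, M < (σ' i : ℕ) + 1 → s i = σ' i) →
      kendallCost w π σ ≤ kendallCost w π s)
    (σstar : Equiv.Perm (Fin n)) :
    kendallCost w π σ ≤ (1 + ε) * kendallCost w π σstar :=
  score_then_adjust_ptas_general ε hε w hw π hπ M hM σ' hσ' σ hbest σstar
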